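/- Let G be a group and ρ: G → GL_2(k) a representation over a field k of characteristic ≠ 2 whose trace satisfies tr ρ ≡ χ_1 + χ_2 for two characters χ_1, χ_2: G → k^× with χ_1 ≠ χ_2 (as an identity of functions, with det ρ = χ_1·χ_2). If ρ is semisimple, then ρ ≅ χ_1 ⊕ χ_2. -/

import Mathlib

/-!
Choose `g₀` with `χ₁ g₀ ≠ χ₂ g₀`. Then `ρ g₀` has the distinct eigenvalues `χ₁ g₀, χ₂ g₀`, so after
a conjugation it is diagonal. Comparing the traces of `ρ g` and `ρ (g₀ g)` pins the diagonal of
every `ρ g` to `(χ₁ g, χ₂ g)`. Writing `b_g, c_g` for the off-diagonal entries, the determinant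
then gives `b_g c_g = 0` and the trace of `ρ (g h)` gives `b_g c_h + c_g b_h = 0`. Hence either
all `c_g` or all `b_g` vanish, and `ρ` has a common eigenline. Semisimplicity provides an
invariant complementary line, whose character is read off from the trace.
-/

/-- The representation of `G` on `Fin 2 → k` associated with a homomorphism
`ρ : G → GL₂(k)`. -/
noncomputable def matrixGLRep {k : Type*} [CommRing k] {G : Type*} [Group G]
    (ρ : G →* Matrix.GeneralLinearGroup (Fin 2) k) : Representation k G (Fin 2 → k) :=
  (Matrix.toLinAlgEquiv' (R := k)).toAlgHom.toRingHom.toMonoidHom.comp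
    ((Units.coeHom (Matrix (Fin 2) (Fin 2) k)).comp ρ)

open Matrix

theorem Module.Basis.exists_forall_eq_mul_diagonal_mul_inv {R n : Type*} [CommRing R]
    [Fintype n] [DecidableEq n] (b : Module.Basis n R (n → R)) :
    ∃ P : GL n R, ∀ (M : Matrix n n R) (c : n → R), (∀ i, M *ᵥ b i = c i • b i) →
      M = P * diagonal c * (P⁻¹ : GL n R) := by
  let P : GL n R := ⟨(Pi.basisFun R n).toMatrix b, b.toMatrix (Pi.basisFun R n),
    (Pi.basisFun R n).toMatrix_mul_toMatrix_flip b, b.toMatrix_mul_toMatrix_flip _⟩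
  refine ⟨P, fun M c h => ?_⟩
  have hMP : M * P = P * diagonal c := by
    ext i j
    rw [mul_diagonal]
    simpa [P, Module.Basis.toMatrix_apply, mul_apply, mulVec, dotProduct, mul_comm]
      using congrFun (h j) i
  rw [← hMP, Matrix.mul_assoc, Units.mul_inv, Matrix.mul_one]

theorem Matrix.exists_mulVec_eq_smul_of_trace_of_det {R : Type*} [CommRing R] [IsDomain R]
    {A : Matrix (Fin 2) (Fin 2) R} {a d : R} (htr : A.trace = a + d) (hdet : A.det = a * d) :
    ∃ v ≠ 0, A *ᵥ v = a • v := by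
  have : (A - a • 1).det = 0 := by
    rw [trace_fin_two] at htr
    rw [det_fin_two] at hdet ⊢
    simp only [sub_apply, smul_apply, one_apply_eq, one_apply_ne zero_ne_one,
      one_apply_ne one_ne_zero]
    linear_combination hdet - a * htr
  obtain ⟨v, hv, hAv⟩ := exists_mulVec_eq_zero_iff.mpr this
  refine ⟨v, hv, ?_⟩
  rwa [sub_mulVec, smul_mulVec, one_mulVec, sub_eq_zero] at hAv

theorem exists_forall_eq_mul_diagonal_mul_inv_of_linearIndependent_pair {k : Type*} [Field k]
    {v w : Fin 2 → k} (hvw : LinearIndependent k ![v, w]) :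
    ∃ P : GL (Fin 2) k, ∀ (M : Matrix (Fin 2) (Fin 2) k) (a d : k), M *ᵥ v = a • v →
      M *ᵥ w = d • w → M = P * diagonal ![a, d] * (P⁻¹ : GL (Fin 2) k) := by
  obtain ⟨P, hP⟩ :=
    (basisOfLinearIndependentOfCardEqFinrank hvw (by simp)).exists_forall_eq_mul_diagonal_mul_inv
  refine ⟨P, fun M a d hv hw => hP M _ fun i => ?_⟩
  fin_cases i
  · simpa using hv
  · simpa using hw

theorem Matrix.exists_eq_mul_diagonal_mul_inv_of_trace_of_det {k : Type*} [Field k]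
    {A : Matrix (Fin 2) (Fin 2) k} {a d : k} (htr : A.trace = a + d) (hdet : A.det = a * d)
    (had : a ≠ d) : ∃ P : GL (Fin 2) k, A = P * diagonal ![a, d] * (P⁻¹ : GL (Fin 2) k) := by
  obtain ⟨v, hv, hAv⟩ := exists_mulVec_eq_smul_of_trace_of_det htr hdet
  obtain ⟨w, hw, hAw⟩ := exists_mulVec_eq_smul_of_trace_of_det (d := a)
    (htr.trans (add_comm a d)) (hdet.trans (mul_comm a d))
  have hvw : LinearIndependent k ![v, w] :=
    Module.End.eigenvectors_linearIndependent' (toLin' A) ![a, d]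
      (by simp [Function.Injective, Fin.forall_fin_two, had, had.symm]) _ fun i => by
        fin_cases i <;> simp [Module.End.hasEigenvector_iff, *]
  obtain ⟨P, hP⟩ := exists_forall_eq_mul_diagonal_mul_inv_of_linearIndependent_pair hvw
  exact ⟨P, hP A a d hAv hAw⟩

section TwoByTwo

variable {G R : Type*} [Monoid G] [CommRing R] [IsDomain R]
  {σ : G →* Matrix (Fin 2) (Fin 2) R} {χ₁ χ₂ : G →* R} {g₀ : G}

theorem diag_eq_of_trace_of_eq_diagonal (htr : ∀ g, (σ g).trace = χ₁ g + χ₂ g)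
    (hg₀ : χ₁ g₀ ≠ χ₂ g₀) (hσ₀ : σ g₀ = diagonal ![χ₁ g₀, χ₂ g₀]) (g : G) :
    σ g 0 0 = χ₁ g ∧ σ g 1 1 = χ₂ g := by
  have htr₁ := htr g
  have htr₂ := htr (g₀ * g)
  simp only [map_mul, hσ₀, diagonal_mul, trace_fin_two] at htr₁ htr₂
  simp only [Fin.isValue, cons_val_zero, cons_val_one] at htr₂
  -- `g` and `g₀ * g` give two linear equations with determinant `χ₁ g₀ - χ₂ g₀ ≠ 0`
  have h : (χ₁ g₀ - χ₂ g₀) * (σ g 0 0 - χ₁ g) = 0 := by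
    linear_combination htr₂ - χ₂ g₀ * htr₁
  have h₀₀ : σ g 0 0 = χ₁ g :=
    sub_eq_zero.mp ((mul_eq_zero.mp h).resolve_left (sub_ne_zero.mpr hg₀))
  exact ⟨h₀₀, by linear_combination htr₁ - h₀₀⟩

theorem forall_apply_one_zero_eq_zero_or_forall_apply_zero_one_eq_zero
    (htr : ∀ g, (σ g).trace = χ₁ g + χ₂ g) (hdet : ∀ g, (σ g).det = χ₁ g * χ₂ g)
    (hg₀ : χ₁ g₀ ≠ χ₂ g₀) (hσ₀ : σ g₀ = diagonal ![χ₁ g₀, χ₂ g₀]) :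
    (∀ g, σ g 1 0 = 0) ∨ (∀ g, σ g 0 1 = 0) := by
  have hdiag := diag_eq_of_trace_of_eq_diagonal htr hg₀ hσ₀
  have hprod : ∀ g, σ g 0 1 * σ g 1 0 = 0 := fun g => by
    have h := hdet g
    rw [det_fin_two, (hdiag g).1, (hdiag g).2] at h
    linear_combination -h
  have hcross : ∀ g h, σ g 0 1 * σ h 1 0 + σ g 1 0 * σ h 0 1 = 0 := fun g h => by
    have ht := htr (g * h)
    simp only [map_mul, trace_fin_two, mul_apply, Fin.sum_univ_two, (hdiag g).1, (hdiag g).2,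
      (hdiag h).1, (hdiag h).2] at ht
    linear_combination ht
  refine or_iff_not_imp_left.mpr fun hne g => ?_
  obtain ⟨h, hh⟩ := not_forall.mp hne
  have h₀₁ : σ h 0 1 = 0 := (mul_eq_zero.mp (hprod h)).resolve_right hh
  have := hcross g h
  rw [h₀₁, mul_zero, add_zero] at this
  exact (mul_eq_zero.mp this).resolve_right hh

end TwoByTwo

theorem exists_common_eigenvector_of_trace_of_det {G k : Type*} [Monoid G] [Field k]
    (ρ : G →* GL (Fin 2) k) (χ₁ χ₂ : G →* k)
    (htr : ∀ g, (ρ g : Matrix (Fin 2) (Fin 2) k).trace = χ₁ g + χ₂ g)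
    (hdet : ∀ g, (ρ g : Matrix (Fin 2) (Fin 2) k).det = χ₁ g * χ₂ g) {g₀ : G}
    (hg₀ : χ₁ g₀ ≠ χ₂ g₀) :
    ∃ v ≠ 0, (∀ g, (ρ g : Matrix (Fin 2) (Fin 2) k) *ᵥ v = χ₁ g • v) ∨
      (∀ g, (ρ g : Matrix (Fin 2) (Fin 2) k) *ᵥ v = χ₂ g • v) := by
  obtain ⟨P, hP⟩ := exists_eq_mul_diagonal_mul_inv_of_trace_of_det (htr g₀) (hdet g₀) hg₀
  let σ : G →* Matrix (Fin 2) (Fin 2) k :=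
    (Units.coeHom _).comp ((MulAut.conj P⁻¹).toMonoidHom.comp ρ)
  have hσ : ∀ g, σ g = (P⁻¹ : GL (Fin 2) k) * ρ g * P := fun g => by simp [σ]
  have hσ₀ : σ g₀ = diagonal ![χ₁ g₀, χ₂ g₀] := by
    rw [hσ, hP]; simp [Matrix.mul_assoc]
  have hσtr : ∀ g, (σ g).trace = χ₁ g + χ₂ g := fun g => by
    rw [hσ, trace_units_conj', htr]
  have hσdet : ∀ g, (σ g).det = χ₁ g * χ₂ g := fun g => by
    rw [hσ, det_units_conj', hdet]
  have hdiag := diag_eq_of_trace_of_eq_diagonal hσtr hg₀ hσ₀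
  have transport : ∀ (i : Fin 2) (χ : G →* k),
      (∀ g, σ g *ᵥ Pi.single i 1 = χ g • Pi.single i 1) →
      ∃ v ≠ 0, ∀ g, (ρ g : Matrix (Fin 2) (Fin 2) k) *ᵥ v = χ g • v := by
    intro i χ h
    refine ⟨(P : Matrix (Fin 2) (Fin 2) k) *ᵥ Pi.single i 1, ?_, fun g => ?_⟩
    · exact (mulVec_injective_iff_isUnit.mpr P.isUnit).ne (by simp) |>.trans_eq (mulVec_zero _)
    · have hρσ : (ρ g : Matrix (Fin 2) (Fin 2) k) * P = P * σ g := by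
        simp [hσ, ← Matrix.mul_assoc]
      rw [mulVec_mulVec, hρσ, ← mulVec_mulVec, h, mulVec_smul]
  rcases forall_apply_one_zero_eq_zero_or_forall_apply_zero_one_eq_zero hσtr hσdet hg₀ hσ₀
    with h | h
  · obtain ⟨v, hv, hρv⟩ := transport 0 χ₁ fun g => by
      ext i; fin_cases i <;> simp [(hdiag g).1, h g]
    exact ⟨v, hv, .inl hρv⟩
  · obtain ⟨v, hv, hρv⟩ := transport 1 χ₂ fun g => by
      ext i; fin_cases i <;> simp [(hdiag g).2, h g]
    exact ⟨v, hv, .inr hρv⟩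

theorem Representation.exists_isCompl_invariant {k G V : Type*} [Field k] [Monoid G]
    [AddCommGroup V] [Module k V] {ρ : Representation k G V}
    (hss : IsSemisimpleModule (MonoidAlgebra k G) ρ.asModule) {p : Submodule k V}
    (hp : ∀ g, ∀ v ∈ p, ρ g v ∈ p) :
    ∃ q : Submodule k V, IsCompl p q ∧ ∀ g, ∀ v ∈ q, ρ g v ∈ q := by
  have := (ρ.isSemisimpleRepresentation_iff_isSemisimpleModule_asModule).mpr hss
  obtain ⟨q, hq⟩ := exists_isCompl (⟨p, fun g _ hv => hp g _ hv⟩ : Subrepresentation ρ)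
  exact ⟨q.toSubmodule, .of_eq (congrArg Subrepresentation.toSubmodule hq.inf_eq_bot)
    (congrArg Subrepresentation.toSubmodule hq.sup_eq_top), q.apply_mem_toSubmodule⟩

theorem Representation.exists_linearIndependent_common_eigenvector {k G V : Type*} [Field k]
    [Monoid G] [AddCommGroup V] [Module k V] {ρ : Representation k G V}
    (hss : IsSemisimpleModule (MonoidAlgebra k G) ρ.asModule) (hV : Module.finrank k V = 2)
    {v : V} (hv : v ≠ 0) {χ : G → k} (hχ : ∀ g, ρ g v = χ g • v) :
    ∃ w, LinearIndependent k ![v, w] ∧ ∀ g, ∃ μ : k, ρ g w = μ • w := by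
  have : FiniteDimensional k V := Module.finite_of_finrank_eq_succ hV
  obtain ⟨q, hpq, hq⟩ := exists_isCompl_invariant hss (p := k ∙ v) fun g x hx => by
    obtain ⟨c, rfl⟩ := Submodule.mem_span_singleton.mp hx
    simp [hχ, smul_smul, Submodule.mem_span_singleton]
  have hq₁ : Module.finrank k q = 1 := by
    have := Submodule.finrank_add_eq_of_isCompl hpq
    rw [finrank_span_singleton hv, hV] at this
    omega
  obtain ⟨⟨w, hwq⟩, hw, hspan⟩ := finrank_eq_one_iff'.mp hq₁
  refine ⟨w, (LinearIndependent.pair_iff' hv).mpr fun a haw => ?_, fun g => ?_⟩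
  · have hwp : w ∈ k ∙ v := haw ▸ Submodule.smul_mem _ a (Submodule.mem_span_singleton_self v)
    exact hw (Subtype.ext (hpq.disjoint.le_bot ⟨hwp, hwq⟩))
  · obtain ⟨μ, hμ⟩ := hspan ⟨ρ g w, hq g w hwq⟩
    exact ⟨μ, congrArg Subtype.val hμ.symm⟩

@[simp]
theorem matrixGLRep_apply {k G : Type*} [CommRing k] [Group G]
    (ρ : G →* GL (Fin 2) k) (g : G) (x : Fin 2 → k) :
    matrixGLRep ρ g x = (ρ g : Matrix (Fin 2) (Fin 2) k) *ᵥ x :=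
  rfl

theorem exists_linearIndependent_common_eigenvector_of_trace {k G : Type*} [Field k] [Group G]
    {ρ : G →* GL (Fin 2) k}
    (hss : IsSemisimpleModule (MonoidAlgebra k G) (matrixGLRep ρ).asModule)
    {v : Fin 2 → k} (hv : v ≠ 0) {χ χ' : G → k}
    (hχ : ∀ g, (ρ g : Matrix (Fin 2) (Fin 2) k) *ᵥ v = χ g • v)
    (htr : ∀ g, (ρ g : Matrix (Fin 2) (Fin 2) k).trace = χ g + χ' g) :
    ∃ w, LinearIndependent k ![v, w] ∧ ∀ g, (ρ g : Matrix (Fin 2) (Fin 2) k) *ᵥ w = χ' g • w := by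
  obtain ⟨w, hvw, hw⟩ :=
    (matrixGLRep ρ).exists_linearIndependent_common_eigenvector hss (by simp) hv hχ
  simp only [matrixGLRep_apply] at hw
  choose μ hμ using hw
  obtain ⟨P, hP⟩ := exists_forall_eq_mul_diagonal_mul_inv_of_linearIndependent_pair hvw
  refine ⟨w, hvw, fun g => ?_⟩
  have htrμ : χ g + μ g = χ g + χ' g := by
    rw [← htr, hP _ _ _ (hχ g) (hμ g), trace_units_conj, trace_fin_two]
    simp
  rw [hμ g, add_left_cancel htrμ]

theorem semisimple_rep_with_split_trace_is_diagonalizable_general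
    {k : Type*} [Field k] {G : Type*} [Group G]
    (ρ : G →* Matrix.GeneralLinearGroup (Fin 2) k)
    (hss : IsSemisimpleModule (MonoidAlgebra k G) (matrixGLRep ρ).asModule)
    (χ₁ χ₂ : G →* kˣ) (hne : χ₁ ≠ χ₂)
    (htr : ∀ g : G, Matrix.trace (ρ g : Matrix (Fin 2) (Fin 2) k) = χ₁ g + χ₂ g)
    (hdet : ∀ g : G, Matrix.det (ρ g : Matrix (Fin 2) (Fin 2) k) = (χ₁ g : k) * (χ₂ g : k)) :
    ∃ P : Matrix.GeneralLinearGroup (Fin 2) k, ∀ g : G,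
      (ρ g : Matrix (Fin 2) (Fin 2) k) =
        (P : Matrix (Fin 2) (Fin 2) k) * Matrix.diagonal ![(χ₁ g : k), (χ₂ g : k)] *
          ((P⁻¹ : Matrix.GeneralLinearGroup (Fin 2) k) : Matrix (Fin 2) (Fin 2) k) := by
  obtain ⟨g₀, hg₀⟩ := DFunLike.ne_iff.mp hne
  obtain ⟨v, hv, hv₁ | hv₂⟩ := exists_common_eigenvector_of_trace_of_det ρ
    ((Units.coeHom k).comp χ₁) ((Units.coeHom k).comp χ₂) htr hdet (Units.val_injective.ne hg₀)
  · obtain ⟨w, hvw, hw⟩ := exists_linearIndependent_common_eigenvector_of_trace hss hv hv₁ htr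
    obtain ⟨P, hP⟩ := exists_forall_eq_mul_diagonal_mul_inv_of_linearIndependent_pair hvw
    exact ⟨P, fun g => hP _ _ _ (hv₁ g) (hw g)⟩
  · obtain ⟨w, hvw, hw⟩ := exists_linearIndependent_common_eigenvector_of_trace hss hv hv₂
      fun g => (htr g).trans (add_comm _ _)
    have hwv : LinearIndependent k ![w, v] := LinearIndependent.pair_symm_iff.mp hvw
    obtain ⟨P, hP⟩ := exists_forall_eq_mul_diagonal_mul_inv_of_linearIndependent_pair hwv
    exact ⟨P, fun g => hP _ _ _ (hw g) (hv₂ g)⟩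

/-- Let `ρ : G → GL₂(k)` be a semisimple representation over a field `k` of characteristic
`≠ 2` with `tr ρ = χ₁ + χ₂` and `det ρ = χ₁·χ₂` for distinct characters `χ₁ ≠ χ₂`. Then
`ρ ≅ χ₁ ⊕ χ₂`, i.e. `ρ` is conjugate to the corresponding diagonal representation. -/
theorem semisimple_rep_with_split_trace_is_diagonalizable
    {k : Type*} [Field k] (h2 : (2 : k) ≠ 0) {G : Type*} [Group G]
    (ρ : G →* Matrix.GeneralLinearGroup (Fin 2) k)
    (hss : IsSemisimpleModule (MonoidAlgebra k G) (matrixGLRep ρ).asModule)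
    (χ₁ χ₂ : G →* kˣ) (hne : χ₁ ≠ χ₂)
    (htr : ∀ g : G, Matrix.trace (ρ g : Matrix (Fin 2) (Fin 2) k) = χ₁ g + χ₂ g)
    (hdet : ∀ g : G, Matrix.det (ρ g : Matrix (Fin 2) (Fin 2) k) = (χ₁ g : k) * (χ₂ g : k)) :
    ∃ P : Matrix.GeneralLinearGroup (Fin 2) k, ∀ g : G,
      (ρ g : Matrix (Fin 2) (Fin 2) k) =
        (P : Matrix (Fin 2) (Fin 2) k) * Matrix.diagonal ![(χ₁ g : k), (χ₂ g : k)] *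
          ((P⁻¹ : Matrix.GeneralLinearGroup (Fin 2) k) : Matrix (Fin 2) (Fin 2) k) :=
  semisimple_rep_with_split_trace_is_diagonalizable_general ρ hss χ₁ χ₂ hne htr hdet
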